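/- Under dichotomous valuations, let A be an envy-freeable allocation, g an unallocated good, and s an agent such that the augmented allocation X = (A_1, ..., A_s ∪ {g}, ..., A_n) is NOT envy-freeable. Then there exist a permutation σ of [n] and an agent k with σ(k) = s such that B := A_σ is envy-freeable with ∑_i v_i(B_i) = ∑_i v_i(A_i) and v_k(A_s ∪ {g}) − v_k(A_s) = 1. -/

import Mathlib

/-!
Take a reassignment `τ` of the bundles of `X` that beats `X` in welfare, and let `k` be the agent
who receives `A s ∪ {g}` under `τ`. Compared with `A` and `A ∘ τ`, the two welfares gain only the
marginals of `g` for `s` and for `k` respectively, each `0` or `1`. Since `A` is welfare maximizing,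
the inequality forces the marginal of `k` to be `1`, that of `s` to be `0`, and, welfares being
natural numbers, `A ∘ τ` to have the same welfare as `A`; so `A ∘ τ` is again welfare maximizing.
-/

open Finset Function

section Welfare

variable {ι β : Type*} [Fintype ι]

def welfare (v : ι → β → ℝ) (B : ι → β) : ℝ := ∑ i, v i (B i)

def IsEnvyFreeable (v : ι → β → ℝ) (B : ι → β) : Prop :=
  ∀ τ : Equiv.Perm ι, welfare v (B ∘ τ) ≤ welfare v B

theorem IsEnvyFreeable.comp_perm_of_welfare_eq {v : ι → β → ℝ} {A : ι → β}
    (hA : IsEnvyFreeable v A) {σ : Equiv.Perm ι} (hσ : welfare v (A ∘ σ) = welfare v A) :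
    IsEnvyFreeable v (A ∘ σ) := fun ρ => hσ ▸ hA (ρ.trans σ)

theorem welfare_update_comp_perm [DecidableEq ι] (v : ι → β → ℝ) (A : ι → β) (s : ι) (T : β)
    (τ : Equiv.Perm ι) :
    welfare v (update A s T ∘ τ) =
      welfare v (A ∘ τ) + (v (τ.symm s) T - v (τ.symm s) (A s)) := by
  rw [← sub_eq_iff_eq_add', welfare, welfare, ← sum_sub_distrib,
    Fintype.sum_eq_single (τ.symm s) fun i hi => ?_]
  · simp
  · have hτi : τ i ≠ s := fun h => hi (τ.eq_symm_apply.mpr h)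
    simp [update_of_ne hτi]

theorem welfare_update [DecidableEq ι] (v : ι → β → ℝ) (A : ι → β) (s : ι) (T : β) :
    welfare v (update A s T) = welfare v A + (v s T - v s (A s)) := by
  simpa using welfare_update_comp_perm v A s T (Equiv.refl ι)

end Welfare

section Dichotomous

variable {α : Type*} [DecidableEq α]

theorem exists_natCast_eq_of_dichotomous {f : Finset α → ℝ} (h₀ : f ∅ = 0)
    (hdich : ∀ (S : Finset α) (a : α), f (insert a S) - f S = 0 ∨ f (insert a S) - f S = 1)
    (S : Finset α) : ∃ N : ℕ, f S = N := by
  induction S using Finset.induction_on with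
  | empty => exact ⟨0, by simp [h₀]⟩
  | @insert a S _ ih =>
    obtain ⟨N, hN⟩ := ih
    rcases hdich S a with h | h
    · exact ⟨N, by linarith⟩
    · exact ⟨N + 1, by push_cast; linarith⟩

theorem exists_natCast_welfare_eq {ι : Type*} [Fintype ι] {v : ι → Finset α → ℝ}
    (h₀ : ∀ i, v i ∅ = 0)
    (hdich : ∀ i (S : Finset α) (a : α),
      v i (insert a S) - v i S = 0 ∨ v i (insert a S) - v i S = 1)
    (B : ι → Finset α) : ∃ N : ℕ, welfare v B = N := by
  choose N hN using fun i => exists_natCast_eq_of_dichotomous (h₀ i) (hdich i) (B i)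
  exact ⟨∑ i, N i, by simp [welfare, hN]⟩

end Dichotomous

theorem find_sink_base_case_general {n m : ℕ}
    (v : Fin n → Finset (Fin m) → ℝ)
    (hempty : ∀ i, v i ∅ = 0)
    (hdich : ∀ i (S : Finset (Fin m)) (g : Fin m),
        v i (insert g S) - v i S = 0 ∨ v i (insert g S) - v i S = 1)
    (A : Fin n → Finset (Fin m))
    (hAfreeable : ∀ τ : Equiv.Perm (Fin n),
        ∑ i, v i (A (τ i)) ≤ ∑ i, v i (A i))
    (g : Fin m)
    (s : Fin n)
    (hXnot : ¬ ∀ τ : Equiv.Perm (Fin n),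
        ∑ i, v i (Function.update A s (insert g (A s)) (τ i)) ≤
          ∑ i, v i (Function.update A s (insert g (A s)) i)) :
    ∃ (σ : Equiv.Perm (Fin n)) (k : Fin n), σ k = s ∧
      (∀ τ : Equiv.Perm (Fin n),
          ∑ i, v i (A (σ (τ i))) ≤ ∑ i, v i (A (σ i))) ∧
      (∑ i, v i (A (σ i)) = ∑ i, v i (A i)) ∧
      v k (insert g (A s)) - v k (A s) = 1 := by
  obtain ⟨τ, hτ⟩ := not_forall.mp hXnot
  set k := τ.symm s
  have hgain : welfare v A + (v s (insert g (A s)) - v s (A s)) <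
      welfare v (A ∘ τ) + (v k (insert g (A s)) - v k (A s)) := by
    rw [← welfare_update, ← welfare_update_comp_perm]
    exact lt_of_not_ge hτ
  have hAτ : welfare v (A ∘ τ) ≤ welfare v A := hAfreeable τ
  have hk : v k (insert g (A s)) - v k (A s) = 1 := by
    rcases hdich k (A s) g with h | h <;> rcases hdich s (A s) g with h' | h' <;> linarith
  obtain ⟨N, hN⟩ := exists_natCast_welfare_eq hempty hdich A
  obtain ⟨M, hM⟩ := exists_natCast_welfare_eq hempty hdich (A ∘ τ)
  have hwelfare : welfare v (A ∘ τ) = welfare v A := by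
    have hMN : M ≤ N := by exact_mod_cast hM ▸ hN ▸ hAτ
    have hNM : N < M + 1 := by
      rcases hdich s (A s) g with h | h <;> exact_mod_cast (show (N : ℝ) < M + 1 by linarith)
    rw [hM, hN, show M = N by omega]
  exact ⟨τ, k, τ.apply_symm_apply s,
    IsEnvyFreeable.comp_perm_of_welfare_eq hAfreeable hwelfare, hwelfare, hk⟩

/-- Under dichotomous valuations, let `A` be an envy-freeable
allocation (welfare maximizing over reassignments of its bundles), `g` an
unallocated good, and `s` an agent such that the augmented allocation
`X = (A_1, ..., A_s ∪ {g}, ..., A_n)` is NOT envy-freeable. Then there exist a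
permutation `σ` and an agent `k` with `σ k = s` such that `B := A_σ` is
envy-freeable with the same social welfare as `A`, and
`v k (A s ∪ {g}) - v k (A s) = 1`. -/
theorem find_sink_base_case {n m : ℕ}
    (v : Fin n → Finset (Fin m) → ℝ)
    (hempty : ∀ i, v i ∅ = 0)
    (hdich : ∀ i (S : Finset (Fin m)) (g : Fin m),
        v i (insert g S) - v i S = 0 ∨ v i (insert g S) - v i S = 1)
    (A : Fin n → Finset (Fin m))
    (hdisj : ∀ i j, i ≠ j → Disjoint (A i) (A j))
    (hAfreeable : ∀ τ : Equiv.Perm (Fin n),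
        ∑ i, v i (A (τ i)) ≤ ∑ i, v i (A i))
    (g : Fin m) (hg : ∀ i, g ∉ A i)
    (s : Fin n)
    (hXnot : ¬ ∀ τ : Equiv.Perm (Fin n),
        ∑ i, v i (Function.update A s (insert g (A s)) (τ i)) ≤
          ∑ i, v i (Function.update A s (insert g (A s)) i)) :
    ∃ (σ : Equiv.Perm (Fin n)) (k : Fin n), σ k = s ∧
      (∀ τ : Equiv.Perm (Fin n),
          ∑ i, v i (A (σ (τ i))) ≤ ∑ i, v i (A (σ i))) ∧
      (∑ i, v i (A (σ i)) = ∑ i, v i (A i)) ∧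
      v k (insert g (A s)) - v k (A s) = 1 :=
  find_sink_base_case_general v hempty hdich A hAfreeable g s hXnot
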